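/- arXiv:1605.02254 — 2 statements merged into one kernel-verified Lean document; each statement's English description precedes it below -/
import Mathlib

section
/- Let f(x) = Σ_{i=0}^d a_i x^i ∈ ℤ_q[x] and let e_n = e_n(π_1,...,π_ℓ) be the coefficients of Π_{j=1}^ℓ E_{c_j f}(x)_{π_j} = Σ_{n≥0} e_n x^n, where E is the Artin–Hasse exponential. Then for all n ≥ 1: n·e_n = Σ_{i=1}^d Σ_{r=0}^∞ i · e_{n - i p^r} · a_i^{p^r} · (Σ_{j=1}^ℓ (c_j π_j)^{p^r}), with the convention e_m = 0 for m < 0. -/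
/-!
Let `θ = X d/dX`. The recurrence for `u` says exactly that `θ E = E · ∑_r X^(p^r)` for
`E = ∑ u_k X^k`. Since `θ` commutes with `X ↦ t X` and `θ (g(X^i)) = i (θ g)(X^i)`, each factor
`E(t X^i)` of the product satisfies `θ E(t X^i) = E(t X^i) · ∑_r i t^(p^r) X^(i p^r)`. As `θ` is a
derivation, `θ` of the product is the product times the sum of these series, and comparing
coefficients of `X^n` gives the recurrence.
-/

/-- The factor `E(c · π_j · x^i)` of `∏_j E_{c_j f}(x)_{π_j}`, as a power series in `x` over
`R[[π_1, …, π_ℓ]]`; `u : ℕ → R` is the coefficient sequence of the Artin–Hasse exponential. -/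
noncomputable def mvAhFactor {R : Type*} [CommRing R] (ℓ : ℕ) (u : ℕ → R) (c : R)
    (i : ℕ) (j : Fin ℓ) : PowerSeries (MvPowerSeries (Fin ℓ) R) :=
  PowerSeries.mk fun n =>
    if i = 0 then
      (if n = 0 then
        (fun s => if s = Finsupp.single j (s j) then u (s j) * c ^ (s j) else 0 :
          MvPowerSeries (Fin ℓ) R)
      else 0)
    else if i ∣ n then
      (MvPowerSeries.monomial (R := R) (Finsupp.single j (n / i))) (u (n / i) * c ^ (n / i))
    else 0

/-- The coefficient `e_n` of `x^n` in `∏_{j=1}^ℓ E_{c_j f}(x)_{π_j}`, extended to integer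
indices by the convention `e_m = 0` for `m < 0`. -/
noncomputable def mvAhCoeff {R : Type*} [CommRing R] (ℓ d : ℕ) (u : ℕ → R) (a : ℕ → R)
    (c : Fin ℓ → R) (n : ℤ) : MvPowerSeries (Fin ℓ) R :=
  if n < 0 then 0
  else PowerSeries.coeff (R := MvPowerSeries (Fin ℓ) R) n.toNat
    (∏ j : Fin ℓ, ∏ i ∈ Finset.range (d + 1), mvAhFactor ℓ u (c j * a i) i j)

open Finset Function

theorem Derivation.map_prod_eq_prod_mul_sum {R A ι : Type*} [CommSemiring R] [CommSemiring A]
    [Algebra R A] (D : Derivation R A A) (s : Finset ι) (G H : ι → A)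
    (h : ∀ k ∈ s, D (G k) = G k * H k) :
    D (∏ k ∈ s, G k) = (∏ k ∈ s, G k) * ∑ k ∈ s, H k := by
  classical
  induction s using Finset.induction_on with
  | empty => simp
  | insert k s hk ih =>
    rw [prod_insert hk, sum_insert hk, D.leibniz, h k (mem_insert_self k s),
      ih fun k' hk' => h k' (mem_insert_of_mem hk'), smul_eq_mul, smul_eq_mul]
    ring

namespace PowerSeries

variable {A : Type*} [CommRing A]

variable (A) in
noncomputable def eulerDerivation : Derivation A A⟦X⟧ A⟦X⟧ :=
  (X : A⟦X⟧) • derivative A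

theorem coeff_eulerDerivation (f : A⟦X⟧) (n : ℕ) :
    coeff n (eulerDerivation A f) = n • coeff n f := by
  rcases n with _ | n
  · simp [eulerDerivation]
  · simp [eulerDerivation, coeff_succ_X_mul, coeff_derivative, nsmul_eq_mul, mul_comm]

theorem eulerDerivation_rescale (t : A) (f : A⟦X⟧) :
    eulerDerivation A (rescale t f) = rescale t (eulerDerivation A f) := by
  ext n
  simp only [coeff_eulerDerivation, coeff_rescale, mul_smul_comm]

theorem eulerDerivation_expand {i : ℕ} (hi : i ≠ 0) (f : A⟦X⟧) :
    eulerDerivation A (expand i hi f) = i • expand i hi (eulerDerivation A f) := by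
  ext n
  rw [coeff_eulerDerivation, map_nsmul, coeff_expand, coeff_expand]
  split_ifs with h
  · obtain ⟨m, rfl⟩ := h
    rw [Nat.mul_div_cancel_left _ (Nat.pos_of_ne_zero hi), coeff_eulerDerivation, mul_smul]
  · simp

/-- For injective `e`, the series `∑ r, T r * X ^ e r`. -/
noncomputable def lacunary (e : ℕ → ℕ) (T : ℕ → A) : A⟦X⟧ :=
  mk (extend e T 0)

theorem coeff_lacunary_eq_sum {e : ℕ → ℕ} (he : StrictMono e) (T : ℕ → A) {m n : ℕ}
    (hm : m ≤ n) :
    coeff m (lacunary e T) = ∑ r ∈ range (n + 1), if e r = m then T r else 0 := by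
  rw [lacunary, coeff_mk]
  by_cases h : ∃ r, e r = m
  · obtain ⟨r, rfl⟩ := h
    rw [he.injective.extend_apply, sum_eq_single_of_mem r
      (mem_range.2 (Nat.lt_succ_of_le ((he.id_le r).trans hm))) fun r' _ hr' => ?_, if_pos rfl]
    exact if_neg (he.injective.ne hr')
  · rw [extend_apply' _ _ _ h, Pi.zero_apply]
    exact (sum_eq_zero fun r _ => if_neg fun hr => h ⟨r, hr⟩).symm

theorem coeff_mul_lacunary {e : ℕ → ℕ} (he : StrictMono e) (T : ℕ → A) (F : A⟦X⟧) (n : ℕ) :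
    coeff n (F * lacunary e T) =
      ∑ r ∈ range (n + 1), if e r ≤ n then coeff (n - e r) F * T r else 0 := by
  calc coeff n (F * lacunary e T)
      = ∑ m ∈ range (n + 1), coeff m (lacunary e T) * coeff (n - m) F := by
        rw [mul_comm, coeff_mul, Nat.sum_antidiagonal_eq_sum_range_succ
          (fun a b => coeff a (lacunary e T) * coeff b F)]
    _ = ∑ m ∈ range (n + 1), ∑ r ∈ range (n + 1),
          if e r = m then coeff (n - m) F * T r else 0 := by
        refine sum_congr rfl fun m hm => ?_
        rw [coeff_lacunary_eq_sum he T (Nat.le_of_lt_succ (mem_range.1 hm)), sum_mul]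
        simp only [ite_mul, zero_mul, mul_comm]
    _ = _ := by
        rw [sum_comm]
        simp only [sum_ite_eq, mem_range, Nat.lt_succ_iff]

theorem rescale_lacunary (t : A) {e : ℕ → ℕ} (he : Injective e) (T : ℕ → A) :
    rescale t (lacunary e T) = lacunary e fun r => t ^ e r * T r := by
  ext m
  rw [coeff_rescale, lacunary, lacunary, coeff_mk, coeff_mk]
  by_cases h : ∃ r, e r = m
  · obtain ⟨r, rfl⟩ := h
    rw [he.extend_apply, he.extend_apply]
  · rw [extend_apply' _ _ _ h, extend_apply' _ _ _ h, Pi.zero_apply, mul_zero]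

theorem expand_lacunary {i : ℕ} (hi : i ≠ 0) {e : ℕ → ℕ} (he : Injective e) (T : ℕ → A) :
    expand i hi (lacunary e T) = lacunary (fun r => i * e r) T := by
  have hie : Injective fun r => i * e r := fun r r' h =>
    he (Nat.eq_of_mul_eq_mul_left (Nat.pos_of_ne_zero hi) h)
  ext m
  rw [coeff_expand, lacunary, lacunary, coeff_mk, coeff_mk]
  by_cases h : ∃ r, i * e r = m
  · obtain ⟨r, rfl⟩ := h
    rw [if_pos (dvd_mul_right i _), Nat.mul_div_cancel_left _ (Nat.pos_of_ne_zero hi),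
      he.extend_apply, hie.extend_apply]
  · rw [extend_apply' _ _ _ h]
    split_ifs with hdvd
    · obtain ⟨k, rfl⟩ := hdvd
      rw [Nat.mul_div_cancel_left _ (Nat.pos_of_ne_zero hi),
        extend_apply' _ _ _ fun ⟨r, hr⟩ => h ⟨r, by rw [hr]⟩]
      rfl
    · rfl

theorem eulerDerivation_mk_of_recurrence {p : ℕ} (hp : 1 < p) (u : ℕ → A)
    (hu : ∀ k : ℕ, 1 ≤ k →
      k • u k = ∑ r ∈ range (k + 1), if p ^ r ≤ k then u (k - p ^ r) else 0) :
    eulerDerivation A (mk u) = mk u * lacunary (p ^ ·) 1 := by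
  ext k
  rw [coeff_eulerDerivation, coeff_mul_lacunary (pow_right_strictMono₀ hp), coeff_mk]
  rcases k with _ | k
  · simp
  · simp [hu (k + 1) k.succ_pos]

variable (A) in
noncomputable def ahLogDeriv (p i : ℕ) (t : A) : A⟦X⟧ :=
  i • lacunary (fun r => i * p ^ r) fun r => t ^ p ^ r

theorem eulerDerivation_expand_rescale_mk {p : ℕ} (hp : 1 < p) (u : ℕ → A)
    (hu : ∀ k : ℕ, 1 ≤ k →
      k • u k = ∑ r ∈ range (k + 1), if p ^ r ≤ k then u (k - p ^ r) else 0)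
    (t : A) {i : ℕ} (hi : i ≠ 0) :
    eulerDerivation A (expand i hi (rescale t (mk u))) =
      expand i hi (rescale t (mk u)) * ahLogDeriv A p i t := by
  have hinj : Injective (p ^ ·) := (pow_right_strictMono₀ hp).injective
  rw [eulerDerivation_expand, eulerDerivation_rescale, eulerDerivation_mk_of_recurrence hp u hu,
    map_mul, map_mul, rescale_lacunary t hinj, expand_lacunary hi hinj, ahLogDeriv,
    mul_smul_comm]
  simp only [Pi.one_apply, mul_one]

theorem coeff_mul_ahLogDeriv {p : ℕ} (hp : 1 < p) (i : ℕ) (t : A) (F : A⟦X⟧) (n : ℕ) :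
    coeff n (F * ahLogDeriv A p i t) =
      ∑ r ∈ range (n + 1),
        i • (if i * p ^ r ≤ n then coeff (n - i * p ^ r) F else 0) * t ^ p ^ r := by
  rcases Nat.eq_zero_or_pos i with rfl | hi
  · simp [ahLogDeriv]
  rw [ahLogDeriv, mul_smul_comm, map_nsmul,
    coeff_mul_lacunary ((pow_right_strictMono₀ hp).const_mul hi), smul_sum]
  refine sum_congr rfl fun r _ => ?_
  split_ifs <;> simp [mul_assoc]

end PowerSeries

theorem MvPowerSeries.C_mul_X_pow_eq_monomial {σ R : Type*} [CommSemiring R] (a : R) (s : σ)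
    (m : ℕ) : C a * X s ^ m = monomial (Finsupp.single s m) a := by
  rw [X_pow_eq, ← monomial_zero_eq_C_apply, monomial_mul_monomial, zero_add, mul_one]

section ArtinHasse

open PowerSeries

variable {R : Type*} [CommRing R] {ℓ : ℕ} (u : ℕ → R)

theorem mvAhFactor_eq_expand (c : R) {i : ℕ} (hi : i ≠ 0) (j : Fin ℓ) :
    mvAhFactor ℓ u c i j =
      expand i hi (rescale (MvPowerSeries.C c * MvPowerSeries.X j)
        (PowerSeries.mk fun k => MvPowerSeries.C (u k))) := by
  ext n : 1
  rw [mvAhFactor, coeff_mk, coeff_expand, if_neg hi]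
  split_ifs
  · rw [coeff_rescale, coeff_mk, mul_pow, ← map_pow, mul_right_comm, ← map_mul,
      MvPowerSeries.C_mul_X_pow_eq_monomial, mul_comm]
  · rfl

theorem eulerDerivation_mvAhFactor_zero (c : R) (j : Fin ℓ) :
    eulerDerivation _ (mvAhFactor ℓ u c 0 j) = 0 := by
  ext n : 1
  rcases n with _ | n
  · simp [coeff_eulerDerivation]
  · simp [coeff_eulerDerivation, mvAhFactor]

theorem eulerDerivation_mvAhFactor {p : ℕ} (hp : 1 < p)
    (hu : ∀ k : ℕ, 1 ≤ k →
      k • u k = ∑ r ∈ Finset.range (k + 1), if p ^ r ≤ k then u (k - p ^ r) else 0)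
    (c : R) (i : ℕ) (j : Fin ℓ) :
    eulerDerivation _ (mvAhFactor ℓ u c i j) =
      mvAhFactor ℓ u c i j * ahLogDeriv _ p i (MvPowerSeries.C c * MvPowerSeries.X j) := by
  rcases eq_or_ne i 0 with rfl | hi
  · simp [eulerDerivation_mvAhFactor_zero, ahLogDeriv]
  have hCu : ∀ k : ℕ, 1 ≤ k → k • MvPowerSeries.C (σ := Fin ℓ) (u k) =
      ∑ r ∈ Finset.range (k + 1),
        if p ^ r ≤ k then MvPowerSeries.C (u (k - p ^ r)) else 0 := fun k hk => by
    simp only [← map_nsmul, hu k hk, map_sum, apply_ite, map_zero]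
  rw [mvAhFactor_eq_expand u c hi, eulerDerivation_expand_rescale_mk hp _ hCu]

variable (d : ℕ) (a : ℕ → R) (c : Fin ℓ → R)

theorem mvAhCoeff_natCast_sub (n k : ℕ) :
    mvAhCoeff ℓ d u a c ((n : ℤ) - k) =
      if k ≤ n then
        PowerSeries.coeff (n - k) (∏ j : Fin ℓ, ∏ i ∈ Finset.range (d + 1),
          mvAhFactor ℓ u (c j * a i) i j)
      else 0 := by
  rw [mvAhCoeff]
  split_ifs with hneg hkn hkn
  · omega
  · rfl
  · rw [← Nat.cast_sub hkn, Int.toNat_natCast]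
  · omega

theorem mvAhCoeff_natCast (n : ℕ) :
    mvAhCoeff ℓ d u a c n =
      PowerSeries.coeff n (∏ j : Fin ℓ, ∏ i ∈ Finset.range (d + 1),
        mvAhFactor ℓ u (c j * a i) i j) := by
  simpa using mvAhCoeff_natCast_sub u d a c n 0

end ArtinHasse

open PowerSeries

/-- The sum over `r` is truncated at `r = n`; all further terms vanish since `p^r > n` forces a
negative index. -/
theorem mvAhCoeff_recurrence_general (p d ℓ : ℕ) [Fact p.Prime] {R : Type*} [CommRing R] (a : ℕ → R)
    (c : Fin ℓ → R) (u : ℕ → R)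
    (hu : ∀ k : ℕ, 1 ≤ k →
      k • u k = ∑ r ∈ Finset.range (k + 1), if p ^ r ≤ k then u (k - p ^ r) else 0)
    (n : ℕ) :
    n • mvAhCoeff ℓ d u a c (n : ℤ)
      = ∑ i ∈ Finset.Icc 1 d, ∑ r ∈ Finset.range (n + 1),
          i • mvAhCoeff ℓ d u a c ((n : ℤ) - (i : ℤ) * (p : ℤ) ^ r)
            * MvPowerSeries.C (σ := Fin ℓ) (R := R) (a i ^ p ^ r)
            * (∑ j : Fin ℓ,
                (MvPowerSeries.C (σ := Fin ℓ) (R := R) (c j) * MvPowerSeries.X j) ^ p ^ r) := by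
  have hp : 1 < p := (Fact.out : p.Prime).one_lt
  set F := ∏ j : Fin ℓ, ∏ i ∈ range (d + 1), mvAhFactor ℓ u (c j * a i) i j
  set t : ℕ → Fin ℓ → MvPowerSeries (Fin ℓ) R :=
    fun i j => MvPowerSeries.C (c j * a i) * MvPowerSeries.X j
  have hθF : eulerDerivation _ F = F * ∑ j, ∑ i ∈ range (d + 1), ahLogDeriv _ p i (t i j) :=
    Derivation.map_prod_eq_prod_mul_sum _ _ _ _ fun j _ =>
      Derivation.map_prod_eq_prod_mul_sum _ _ _ _ fun i _ =>
        eulerDerivation_mvAhFactor u hp hu _ i j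
  calc n • mvAhCoeff ℓ d u a c n
      = coeff n (eulerDerivation _ F) := by
        rw [coeff_eulerDerivation, mvAhCoeff_natCast]
    _ = ∑ i ∈ range (d + 1), ∑ r ∈ range (n + 1), ∑ j,
          i • (if i * p ^ r ≤ n then coeff (n - i * p ^ r) F else 0) * t i j ^ p ^ r := by
      simp only [hθF, mul_sum, map_sum, coeff_mul_ahLogDeriv hp]
      exact sum_comm.trans (sum_congr rfl fun i _ => sum_comm)
    _ = ∑ i ∈ Icc 1 d, ∑ r ∈ range (n + 1), ∑ j,
          i • (if i * p ^ r ≤ n then coeff (n - i * p ^ r) F else 0) * t i j ^ p ^ r := by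
      refine (sum_subset (fun i hi => ?_) fun i hi hi' => ?_).symm
      · simp only [mem_Icc, mem_range] at hi ⊢; omega
      · obtain rfl : i = 0 := by simp only [mem_Icc, mem_range] at hi hi'; omega
        simp
    _ = _ := by
      refine sum_congr rfl fun i _ => sum_congr rfl fun r _ => ?_
      rw [show (n : ℤ) - i * p ^ r = n - (i * p ^ r : ℕ) by push_cast; ring,
        mvAhCoeff_natCast_sub, mul_sum]
      refine sum_congr rfl fun j _ => ?_
      simp only [t, map_mul, mul_pow, map_pow]
      ring

/-- Lemma 5.2 of Ren–Wan–Xiao–Yu (the identity): with `f = ∑_{i=0}^d a_i x^i` and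
`e_n` the coefficients of `∏_j E_{c_j f}(x)_{π_j}`, for all `n ≥ 1`:
`n e_n = ∑_{i=1}^d ∑_{r≥0} i · e_{n - i p^r} · a_i^{p^r} · (∑_j (c_j π_j)^{p^r})`,
with `e_m = 0` for `m < 0`.  (The sum over `r` is truncated at `r = n`; all further terms
vanish since `p^r > n` forces a negative index.) -/
theorem mvAhCoeff_recurrence (p d ℓ : ℕ) [Fact p.Prime] (hd : 0 < d) (hpd : ¬ p ∣ d)
    (hℓ : 0 < ℓ) {R : Type*} [CommRing R] (a : ℕ → R) (had : IsUnit (a d)) (c : Fin ℓ → R)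
    (u : ℕ → R) (hu0 : u 0 = 1)
    (hu : ∀ k : ℕ, 1 ≤ k →
      k • u k = ∑ r ∈ Finset.range (k + 1), if p ^ r ≤ k then u (k - p ^ r) else 0)
    (n : ℕ) (hn : 1 ≤ n) :
    n • mvAhCoeff ℓ d u a c (n : ℤ)
      = ∑ i ∈ Finset.Icc 1 d, ∑ r ∈ Finset.range (n + 1),
          i • mvAhCoeff ℓ d u a c ((n : ℤ) - (i : ℤ) * (p : ℤ) ^ r)
            * MvPowerSeries.C (σ := Fin ℓ) (R := R) (a i ^ p ^ r)
            * (∑ j : Fin ℓ,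
                (MvPowerSeries.C (σ := Fin ℓ) (R := R) (c j) * MvPowerSeries.X j) ^ p ^ r) :=
  mvAhCoeff_recurrence_general p d ℓ a c u hu n
end

section
/- Let R be a commutative ring, I ⊆ R an ideal, and M_0, ..., M_{a-1} be k×k matrices (truncations of twisted I-adically incremental matrices): assume the (m,n)-entry of each M_j lies in I^{⌈(pm-n)/d⌉}. Then the coefficient r_k of s^k in det(1 - s·M_{a-1}⋯M_1M_0) satisfies r_k ∈ I^{⌈ak(k-1)(p-1)/(2d)⌉}. -/
/-!
In the Leibniz expansion of `det M_j`, the term `∏ᵢ M_j (σ i) i` lies in `I^e` with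
`e = ∑ᵢ ⌈(p σ(i) - i)/d⌉ ≥ ∑ᵢ (p σ(i) - i)/d = (p - 1) k (k - 1)/(2d)`, because `σ` merely
permutes the row indices; so `det M_j ∈ I^⌈k(k-1)(p-1)/(2d)⌉`. Reversing the characteristic
polynomial, the coefficient of `s^k` in `det(1 - s N)` is `(-1)^k det N`, and for
`N = M_{a-1} ⋯ M_0` this is `± ∏ⱼ det M_j`.
-/

open Polynomial Finset

theorem Nat.ceil_sum_le {ι α : Type*} [Semiring α] [LinearOrder α] [IsStrictOrderedRing α]
    [FloorSemiring α] (s : Finset ι) (f : ι → α) :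
    ⌈∑ i ∈ s, f i⌉₊ ≤ ∑ i ∈ s, ⌈f i⌉₊ :=
  Finset.le_sum_of_subadditive _ Nat.ceil_zero.le Nat.ceil_add_le s f

namespace Matrix

variable {n R : Type*} [Fintype n] [DecidableEq n] [CommRing R]

theorem coeff_charpolyRev_card (M : Matrix n n R) :
    M.charpolyRev.coeff (Fintype.card n) = (-1) ^ Fintype.card n * M.det := by
  nontriviality R
  rw [← reverse_charpoly, coeff_reverse, charpoly_natDegree_eq_dim, revAt_le le_rfl,
    Nat.sub_self, det_eq_sign_charpoly_coeff, ← mul_assoc, ← pow_add, Even.neg_one_pow ⟨_, rfl⟩,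
    one_mul]

theorem det_mem_pow_of_mem_pow (I : Ideal R) (N : Matrix n n R) (e : n → n → ℕ) (E : ℕ)
    (hN : ∀ i j, N i j ∈ I ^ e i j) (hE : ∀ σ : Equiv.Perm n, E ≤ ∑ i, e (σ i) i) :
    N.det ∈ I ^ E := by
  rw [det_apply]
  refine Submodule.sum_mem _ fun σ _ => ?_
  rw [Units.smul_def, zsmul_eq_mul]
  refine Ideal.mul_mem_left _ _ (Ideal.pow_le_pow_right (hE σ) ?_)
  rw [← prod_pow_eq_pow_sum]
  exact Ideal.prod_mem_prod fun i _ => hN (σ i) i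

end Matrix

theorem Fin.sum_val_mul_two {R : Type*} [Semiring R] (k : ℕ) :
    (∑ i : Fin k, (i : R)) * 2 = k * (k - 1 : ℕ) := by
  rw [Fin.sum_univ_eq_sum_range (fun i => (i : R)), ← Nat.cast_sum, ← Nat.cast_ofNat,
    ← Nat.cast_mul, sum_range_id_mul_two, Nat.cast_mul]

theorem Equiv.Perm.sum_mul_comp_sub {ι R : Type*} [Fintype ι] [CommRing R] (c : R)
    (σ : Equiv.Perm ι) (f : ι → R) :
    ∑ i, (c * f (σ i) - f i) = (c - 1) * ∑ i, f i := by
  rw [sum_sub_distrib, ← mul_sum, Equiv.sum_comp σ f]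
  ring

theorem ceil_le_sum_ceil_perm_twist {p d k : ℕ} (hp : 0 < p) (σ : Equiv.Perm (Fin k)) :
    ⌈((k * (k - 1) * (p - 1) : ℕ) : ℚ) / ((2 * d : ℕ) : ℚ)⌉₊
      ≤ ∑ i, ⌈((((p : ℤ) * (σ i : ℕ) - (i : ℕ) : ℤ)) : ℚ) / (d : ℚ)⌉₊ := by
  refine le_trans (Nat.ceil_mono (le_of_eq ?_)) (Nat.ceil_sum_le _ _)
  push_cast
  rw [← sum_div, σ.sum_mul_comp_sub _ fun i => ((i : ℕ) : ℚ), Nat.cast_sub hp,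
    ← Fin.sum_val_mul_two]
  ring

theorem charpoly_coeff_mem_pow_ideal_general
    {R : Type*} [CommRing R] (I : Ideal R) (p d a k : ℕ)
    (hp : 0 < p)
    (M : Fin a → Matrix (Fin k) (Fin k) R)
    (hM : ∀ (j : Fin a) (m n : Fin k),
      M j m n ∈ I ^ (Int.toNat ⌈((((p : ℤ) * (m : ℕ) - (n : ℕ) : ℤ)) : ℚ) / (d : ℚ)⌉)) :
    (Matrix.det
        ((1 : Matrix (Fin k) (Fin k) (Polynomial R))
          - (Polynomial.X : Polynomial R) •
            ((List.ofFn fun j : Fin a =>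
              (M j).map (fun x => Polynomial.C x)).reverse.prod))).coeff k
      ∈ I ^ (Int.toNat ⌈((a * k * (k - 1) * (p - 1) : ℕ) : ℚ) / ((2 * d : ℕ) : ℚ)⌉) := by
  simp only [Int.ceil_toNat] at hM ⊢
  have hmap : (List.ofFn fun j => (M j).map C).reverse.prod
      = ((List.ofFn M).reverse.prod).map C := by
    rw [← RingHom.mapMatrix_apply, map_list_prod, List.map_reverse, List.map_ofFn]
    rfl
  have hdet : ((List.ofFn M).reverse.prod).det = ∏ j, (M j).det := by
    rw [← Matrix.coe_detMonoidHom, map_list_prod, List.map_reverse, List.prod_reverse,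
      List.map_ofFn, List.prod_ofFn]
    rfl
  have hcoeff := Matrix.coeff_charpolyRev_card ((List.ofFn M).reverse.prod)
  rw [Fintype.card_fin, Matrix.charpolyRev, hdet] at hcoeff
  set x : ℚ := ((k * (k - 1) * (p - 1) : ℕ) : ℚ) / ((2 * d : ℕ) : ℚ)
  have hprod : ∏ j, (M j).det ∈ I ^ ∑ _j : Fin a, ⌈x⌉₊ := by
    rw [← prod_pow_eq_pow_sum]
    exact Ideal.prod_mem_prod fun j _ =>
      Matrix.det_mem_pow_of_mem_pow I (M j) _ _ (hM j) (ceil_le_sum_ceil_perm_twist hp)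
  rw [hmap, hcoeff]
  refine Ideal.mul_mem_left _ _ (Ideal.pow_le_pow_right ?_ hprod)
  calc ⌈((a * k * (k - 1) * (p - 1) : ℕ) : ℚ) / ((2 * d : ℕ) : ℚ)⌉₊ = ⌈∑ _j : Fin a, x⌉₊ := by
        rw [sum_const, card_fin, nsmul_eq_mul]
        congr 1
        simp only [x]
        push_cast
        ring
    _ ≤ ∑ _j : Fin a, ⌈x⌉₊ := Nat.ceil_sum_le _ _

/-- Proposition 4.4 of Ren–Wan–Xiao–Yu (first assertion, finite-matrix setting).  Let
`M_0, …, M_{a-1}` be `k × k` matrices over `(R, I)` that are twisted `I`-adically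
incremental in `d` steps: the `(m,n)`-entry of each `M_j` lies in `I^⌈(pm-n)/d⌉`
(with `I^t = R` for `t ≤ 0`).  Then the coefficient `r_k` of `s^k` in
`det(1 - s · M_{a-1} ⋯ M_1 M_0)` lies in `I^⌈ak(k-1)(p-1)/(2d)⌉`. -/
theorem charpoly_coeff_mem_pow_ideal
    {R : Type*} [CommRing R] (I : Ideal R) (p d a k : ℕ)
    (hp : 0 < p) (hd : 0 < d) (ha : 0 < a)
    (M : Fin a → Matrix (Fin k) (Fin k) R)
    (hM : ∀ (j : Fin a) (m n : Fin k),
      M j m n ∈ I ^ (Int.toNat ⌈((((p : ℤ) * (m : ℕ) - (n : ℕ) : ℤ)) : ℚ) / (d : ℚ)⌉)) :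
    (Matrix.det
        ((1 : Matrix (Fin k) (Fin k) (Polynomial R))
          - (Polynomial.X : Polynomial R) •
            ((List.ofFn fun j : Fin a =>
              (M j).map (fun x => Polynomial.C x)).reverse.prod))).coeff k
      ∈ I ^ (Int.toNat ⌈((a * k * (k - 1) * (p - 1) : ℕ) : ℚ) / ((2 * d : ℕ) : ℚ)⌉) :=
  charpoly_coeff_mem_pow_ideal_general I p d a k hp M hM
end
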